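/- arXiv:2308.15184 — 2 statements merged into one kernel-verified Lean document; each statement's English description precedes it below -/
import Mathlib

section
/- Semantic correctness of Algorithm 6 (conjunction of reachability and safety tasks under a safety environment specification): let T₁ be a set of nonempty finite words over A × B, let M₂ and M₃ be DFAs over A × B with finite state types and accepting sets F₂ and F₃, let T₂ and T₃ be the sets of nonempty finite words accepted by M₂ and M₃ respectively, and define EnvWinsFrom₃(q) to hold iff there exists an environment strategy σenv such that for every agent strategy σag and every k ≥ 1, M₃.evalFrom q (play(σag, σenv)_{<k}) ∈ F₃. For a play π write run₂(k) = M₂.eval(π_{<k}) and run₃(k) = M₃.eval(π_{<k}), and say Bad(π, k) holds iff ¬EnvWinsFrom₃(run₃(k)) or (k ≥ 1 and run₃(k) ∉ F₃). For states q₂ of M₂ and q₃ of M₃, define AgentSafeUnder(q₂, q₃) to hold iff there exists an agent strategy σag such that for every σenv, writing π = play(σag, σenv), for every m ≥ 1: M₂.evalFrom q₂ (π_{<m}) ∈ F₂, or there exists k ≤ m with ¬EnvWinsFrom₃(M₃.evalFrom q₃ (π_{<k})) or (k ≥ 1 and M₃.evalFrom q₃ (π_{<k}) ∉ F₃). Then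 the following are equivalent: (i) there exists an agent strategy enforcing Reach T₁ ∩ Safe T₂ under the environment specification Safe T₃; (ii) there exists an agent strategy σag such that for every σenv, writing π = play(σag, σenv), there exists m ≥ 0 with: either Bad(π, k) for some k ≤ m, or (m ≥ 1, π_{<m} ∈ T₁, π_{<j} ∈ T₂ for all 1 ≤ j ≤ m, and AgentSafeUnder(run₂(m), run₃(m))). -/
/-- The first `k` letters of an infinite trace. -/
def pre {α : Type} (π : ℕ → α) (k : ℕ) : List α := (List.range k).map π

/-- The finite history of pairs of moves after `k` rounds. -/
def playPrefix {A B : Type} (σag : List B → A) (σenv : List A → B) : ℕ → List (A × B)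
  | 0 => []
  | k + 1 =>
      let h := playPrefix σag σenv k
      let a := σag (h.map Prod.snd)
      let b := σenv (h.map Prod.fst ++ [a])
      h ++ [(a, b)]

/-- The infinite play generated by an agent strategy `σag : List B → A`
(the agent moves first) and an environment strategy `σenv : List A → B`:
`a₀ = σag []`, `b₀ = σenv [a₀]`, `a_{i+1} = σag [b₀, …, b_i]`,
`b_{i+1} = σenv [a₀, …, a_{i+1}]`, and `play σag σenv i = (a_i, b_i)`. -/
def play {A B : Type} (σag : List B → A) (σenv : List A → B) (i : ℕ) : A × B :=
  let h := playPrefix σag σenv i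
  let a := σag (h.map Prod.snd)
  let b := σenv (h.map Prod.fst ++ [a])
  (a, b)

/-- Reachability property: some nonempty finite prefix is in `T`. -/
def Reach {A B : Type} (T : Set (List (A × B))) : Set (ℕ → A × B) :=
  {π | ∃ k, 1 ≤ k ∧ pre π k ∈ T}

/-- Safety property: every nonempty finite prefix is in `T`. -/
def Safe {A B : Type} (T : Set (List (A × B))) : Set (ℕ → A × B) :=
  {π | ∀ k, 1 ≤ k → pre π k ∈ T}

/-- The agent strategy `σag` enforces the property `P`. -/
def AgentEnforces {A B : Type} (σag : List B → A) (P : Set (ℕ → A × B)) : Prop :=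
  ∀ σenv : List A → B, play σag σenv ∈ P

/-- The environment strategy `σenv` enforces the property `P`. -/
def EnvEnforces {A B : Type} (σenv : List A → B) (P : Set (ℕ → A × B)) : Prop :=
  ∀ σag : List B → A, play σag σenv ∈ P

/-- The agent strategy `σag` enforces `Task` under the environment
specification `Env`. -/
def EnforcesUnder {A B : Type} (σag : List B → A) (Task Env : Set (ℕ → A × B)) : Prop :=
  ∀ σenv : List A → B, EnvEnforces σenv Env → play σag σenv ∈ Task

/-- `EnvWinsSafeFrom M q` : the environment has a strategy ensuring that,
starting the run of `M` from state `q`, every state reached after `k ≥ 1`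
letters of the play lies in `M.accept`. -/
def EnvWinsSafeFrom {A B Q : Type} (M : DFA (A × B) Q) (q : Q) : Prop :=
  ∃ σenv : List A → B, ∀ σag : List B → A, ∀ k, 1 ≤ k →
    M.evalFrom q (pre (play σag σenv) k) ∈ M.accept

/-- `BadAt M₃ π k` : at time `k` the run of `M₃` on the play `π` witnesses a
violation of the environment's safety specification: either the reached state
is not in the environment's safety winning region, or `k ≥ 1` and the reached
state is not accepting. -/
def BadAt {A B Q₃ : Type} (M₃ : DFA (A × B) Q₃) (π : ℕ → A × B) (k : ℕ) : Prop :=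
  ¬ EnvWinsSafeFrom M₃ (M₃.eval (pre π k)) ∨
    (1 ≤ k ∧ M₃.eval (pre π k) ∉ M₃.accept)

/-- `AgentSafeUnder M₂ M₃ q₂ q₃` : the agent has a strategy such that against
every environment strategy, at every time `m ≥ 1`, either the run of `M₂` from
`q₂` is accepting, or by time `m` the run of `M₃` from `q₃` has left the
environment's safety winning region or left `M₃.accept` (at a time `k ≥ 1`). -/
def AgentSafeUnder {A B Q₂ Q₃ : Type} (M₂ : DFA (A × B) Q₂) (M₃ : DFA (A × B) Q₃)
    (q₂ : Q₂) (q₃ : Q₃) : Prop :=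
  ∃ σag : List B → A, ∀ σenv : List A → B, ∀ m : ℕ, 1 ≤ m →
    M₂.evalFrom q₂ (pre (play σag σenv) m) ∈ M₂.accept ∨
    ∃ k : ℕ, k ≤ m ∧
      (¬ EnvWinsSafeFrom M₃ (M₃.evalFrom q₃ (pre (play σag σenv) k)) ∨
        (1 ≤ k ∧ M₃.evalFrom q₃ (pre (play σag σenv) k) ∉ M₃.accept))

/-!
If along a play the run of `M₃` never leaves the environment's safety winning region nor (after
the first move) `M₃.accept`, the environment can follow that play and, at the first deviation of
the agent, switch to a winning strategy from the state reached there. So such plays are exactly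
the plays consistent with some environment enforcing `Safe T₃`, and every finite play of this kind
extends (by playing a winning strategy from its last state) to an infinite one.

Hence an agent enforcing the task reaches a `T₁`-prefix at some time `m` of every such play, and
its strategy after time `m` witnesses `AgentSafeUnder`: a non-violating continuation is a prefix of
a play against an environment enforcing `Safe T₃`, on which the agent keeps `M₂` accepting.
Conversely, the agent follows the given strategy until the first time at which the good condition
holds, and then the `AgentSafeUnder` witness from the pair of states reached; against an
environment enforcing `Safe T₃` the witness cannot be excused by a violation, so `M₂` stays
accepting.
-/

section Games

variable {A B : Type}

section Play

variable (σa : List B → A) (σe : List A → B)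

theorem playPrefix_succ (k : ℕ) :
    playPrefix σa σe (k + 1) = playPrefix σa σe k ++ [play σa σe k] := rfl

@[simp] theorem length_playPrefix (k : ℕ) : (playPrefix σa σe k).length = k := by
  induction k with
  | zero => rfl
  | succ k ih => simp [playPrefix_succ, ih]

theorem playPrefix_ne_nil {k : ℕ} (hk : 1 ≤ k) : playPrefix σa σe k ≠ [] :=
  List.ne_nil_of_length_pos (by simp; omega)

theorem pre_play (k : ℕ) : pre (play σa σe) k = playPrefix σa σe k := by
  induction k with
  | zero => rfl
  | succ k ih => simp [pre, List.range_succ, playPrefix_succ, ← ih]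

theorem play_eq_of_playPrefix_eq {σa' : List B → A} {σe' : List A → B}
    (h : ∀ k, playPrefix σa σe k = playPrefix σa' σe' k) : play σa σe = play σa' σe' := by
  funext i
  simpa [playPrefix_succ, h i] using h (i + 1)

def strategyAfter {α β : Type} (σ : List α → β) (h : List α) : List α → β := fun l => σ (h ++ l)

theorem playPrefix_add (m k : ℕ) :
    playPrefix σa σe (m + k) = playPrefix σa σe m ++
      playPrefix (strategyAfter σa ((playPrefix σa σe m).map Prod.snd))
        (strategyAfter σe ((playPrefix σa σe m).map Prod.fst)) k := by
  induction k with
  | zero => simp [playPrefix]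
  | succ k ih =>
    rw [← add_assoc, playPrefix_succ, playPrefix_succ, ih, List.append_assoc]
    simp [play, ih, strategyAfter]

theorem playPrefix_take {k n : ℕ} (h : k ≤ n) :
    (playPrefix σa σe n).take k = playPrefix σa σe k := by
  obtain ⟨d, rfl⟩ := Nat.exists_eq_add_of_le h
  rw [playPrefix_add]
  exact List.take_left' (length_playPrefix _ _ _)

variable {σa σe}

theorem playPrefix_congr {σa' : List B → A} {σe' : List A → B} {n : ℕ}
    (ha : ∀ k < n, σa' ((playPrefix σa σe k).map Prod.snd)
      = σa ((playPrefix σa σe k).map Prod.snd))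
    (he : ∀ k < n, σe' ((playPrefix σa σe (k + 1)).map Prod.fst)
      = σe ((playPrefix σa σe (k + 1)).map Prod.fst)) :
    playPrefix σa' σe' n = playPrefix σa σe n := by
  induction n with
  | zero => rfl
  | succ n ih =>
    have ih := ih (fun k hk => ha k (by omega)) (fun k hk => he k (by omega))
    have hn := he n (by omega)
    simp only [playPrefix_succ, List.map_append, List.map_cons, List.map_nil, play] at hn
    simp only [playPrefix_succ, ih, play, ha n (by omega), hn]

end Play

section Splice

variable (σa : List B → A) (σe : List A → B)

/-- Play `σe` for the first `m` rounds, then `τ` on the agent's moves from round `m` on. -/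
def spliceEnv (σe : List A → B) (m : ℕ) (τ : List A → B) : List A → B :=
  fun l => if l.length ≤ m then σe l else τ (l.drop m)

/-- Play `σa` for the first `m` rounds, then `τ` on the environment's moves from round `m` on. -/
def spliceAg (σa : List B → A) (m : ℕ) (τ : List B → A) : List B → A :=
  fun l => if l.length < m then σa l else τ (l.drop m)

theorem playPrefix_spliceEnv_of_le (τ : List A → B) {m k : ℕ} (h : k ≤ m) :
    playPrefix σa (spliceEnv σe m τ) k = playPrefix σa σe k :=
  playPrefix_congr (fun _ _ => rfl) fun j hj => if_pos (by simp; omega)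

theorem playPrefix_spliceEnv_add (τ : List A → B) (m k : ℕ) :
    playPrefix σa (spliceEnv σe m τ) (m + k) = playPrefix σa σe m ++
      playPrefix (strategyAfter σa ((playPrefix σa σe m).map Prod.snd)) τ k := by
  rw [playPrefix_add, playPrefix_spliceEnv_of_le σa σe τ le_rfl]
  refine congrArg _ (playPrefix_congr (fun _ _ => rfl) fun j _ => ?_)
  simp only [strategyAfter, spliceEnv]
  rw [if_neg (by simp), List.drop_left' (by simp)]

theorem playPrefix_spliceAg_of_le (τ : List B → A) {m k : ℕ} (h : k ≤ m) :
    playPrefix (spliceAg σa m τ) σe k = playPrefix σa σe k :=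
  playPrefix_congr (fun j hj => if_pos (by simp; omega)) fun _ _ => rfl

theorem playPrefix_spliceAg_add (τ : List B → A) (m k : ℕ) :
    playPrefix (spliceAg σa m τ) σe (m + k) = playPrefix σa σe m ++
      playPrefix τ (strategyAfter σe ((playPrefix σa σe m).map Prod.fst)) k := by
  have hτ : strategyAfter (spliceAg σa m τ) ((playPrefix σa σe m).map Prod.snd) = τ := by
    funext l
    simp only [strategyAfter, spliceAg]
    rw [if_neg (by simp), List.drop_left' (by simp)]
  rw [playPrefix_add, playPrefix_spliceAg_of_le σa σe τ le_rfl, hτ]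

end Splice

section Safety

variable {Q : Type} (M : DFA (A × B) Q)

def IsSafeEnvStrategy (q : Q) (σe : List A → B) : Prop :=
  ∀ σa : List B → A, ∀ k, 1 ≤ k → M.evalFrom q (playPrefix σa σe k) ∈ M.accept

variable {M}

theorem envWinsSafeFrom_iff {q : Q} : EnvWinsSafeFrom M q ↔ ∃ σe, IsSafeEnvStrategy M q σe := by
  simp only [EnvWinsSafeFrom, IsSafeEnvStrategy, pre_play]

theorem IsSafeEnvStrategy.strategyAfter {q : Q} {σe : List A → B} (h : IsSafeEnvStrategy M q σe)
    (σa : List B → A) (m : ℕ) :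
    IsSafeEnvStrategy M (M.evalFrom q (playPrefix σa σe m))
      (strategyAfter σe ((playPrefix σa σe m).map Prod.fst)) := by
  intro τ k hk
  have := h (spliceAg σa m τ) (m + k) (by omega)
  rwa [playPrefix_spliceAg_add, DFA.evalFrom_of_append] at this

def BadFrom (M : DFA (A × B) Q) (q : Q) (w : List (A × B)) : Prop :=
  ¬ EnvWinsSafeFrom M (M.evalFrom q w) ∨ (w ≠ [] ∧ M.evalFrom q w ∉ M.accept)

theorem not_badFrom_iff {q : Q} {w : List (A × B)} :
    ¬ BadFrom M q w ↔
      EnvWinsSafeFrom M (M.evalFrom q w) ∧ (w ≠ [] → M.evalFrom q w ∈ M.accept) := by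
  simp only [BadFrom, not_or, not_and, not_not]

theorem badFrom_iff_of_length_eq {q : Q} {w : List (A × B)} {k : ℕ} (hw : w.length = k) :
    BadFrom M q w ↔
      ¬ EnvWinsSafeFrom M (M.evalFrom q w) ∨ (1 ≤ k ∧ M.evalFrom q w ∉ M.accept) := by
  rw [BadFrom, ← List.length_pos_iff, hw]
  exact Iff.rfl

theorem badAt_iff_badFrom {π : ℕ → A × B} {k : ℕ} :
    BadAt M π k ↔ BadFrom M M.start (pre π k) :=
  (badFrom_iff_of_length_eq (by simp [pre])).symm

theorem badFrom_append_of_badFrom {q : Q} {u v : List (A × B)}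
    (h : BadFrom M (M.evalFrom q u) v) : BadFrom M q (u ++ v) := by
  rw [BadFrom, DFA.evalFrom_of_append]
  exact h.imp_right fun ⟨_, hv⟩ => ⟨by simp_all, hv⟩

theorem badFrom_append_iff {q : Q} {u v : List (A × B)} (hv : v ≠ []) :
    BadFrom M q (u ++ v) ↔ BadFrom M (M.evalFrom q u) v := by
  simp only [BadFrom, DFA.evalFrom_of_append, ne_eq, List.append_eq_nil_iff, hv, and_false,
    not_false_eq_true]

theorem IsSafeEnvStrategy.not_badFrom {q : Q} {σe : List A → B} (h : IsSafeEnvStrategy M q σe)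
    (σa : List B → A) (k : ℕ) : ¬ BadFrom M q (playPrefix σa σe k) := by
  refine not_badFrom_iff.mpr ⟨?_, fun hne => h σa k ?_⟩
  · exact envWinsSafeFrom_iff.mpr ⟨_, h.strategyAfter σa k⟩
  · exact Nat.one_le_iff_ne_zero.mpr (by rintro rfl; exact hne rfl)

end Safety

section Deviation

variable (σa : List B → A) (σe : List A → B)

theorem getElem?_map_fst_playPrefix {i n : ℕ} (h : i < n) :
    ((playPrefix σa σe n).map Prod.fst)[i]? = some (play σa σe i).1 := by
  rw [← pre_play]
  simp [pre, h]

open Classical in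
/-- Play `σe` as long as the agent moves as `σa` does against `σe`; after the first deviation,
in round `j`, play `W j` on the agent's moves from round `j` on. -/
noncomputable def deviationEnv (W : ℕ → List A → B) : List A → B := fun l =>
  if h : ∃ j, ∃ a ∈ l[j]?, a ≠ (play σa σe j).1 then W (Nat.find h) (l.drop (Nat.find h))
  else σe l

variable {σa σe}

theorem deviationEnv_of_playPrefix (W : ℕ → List A → B) (n : ℕ) :
    deviationEnv σa σe W ((playPrefix σa σe n).map Prod.fst) =
      σe ((playPrefix σa σe n).map Prod.fst) := by
  refine dif_neg ?_
  rintro ⟨j, a, ha, hne⟩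
  have hj : j < n := by simpa using (List.getElem?_eq_some_iff.mp ha).1
  rw [getElem?_map_fst_playPrefix σa σe hj, Option.mem_some_iff] at ha
  exact hne ha.symm

theorem playPrefix_deviationEnv_of_agree (W : ℕ → List A → B) {σa' : List B → A} {n : ℕ}
    (h : ∀ j < n, (play σa' (deviationEnv σa σe W) j).1 = (play σa σe j).1) :
    playPrefix σa' (deviationEnv σa σe W) n = playPrefix σa σe n := by
  induction n with
  | zero => rfl
  | succ n ih =>
    have ih := ih fun j hj => h j (by omega)
    have hfst := h n (by omega)
    have hq : (playPrefix σa' (deviationEnv σa σe W) n).map Prod.fst ++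
        [(play σa' (deviationEnv σa σe W) n).1] = (playPrefix σa σe (n + 1)).map Prod.fst := by
      rw [ih, hfst, playPrefix_succ, List.map_append, List.map_singleton]
    have hsnd : (play σa' (deviationEnv σa σe W) n).2 = (play σa σe n).2 := by
      change deviationEnv σa σe W (_ ++ [(play σa' (deviationEnv σa σe W) n).1]) = _
      rw [hq, deviationEnv_of_playPrefix]
      simp only [playPrefix_succ, List.map_append, List.map_singleton, play]
    rw [playPrefix_succ, playPrefix_succ, ih, Prod.ext hfst hsnd]

theorem play_deviationEnv (W : ℕ → List A → B) :
    play σa (deviationEnv σa σe W) = play σa σe :=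
  play_eq_of_playPrefix_eq _ _ fun _ =>
    playPrefix_congr (fun _ _ => rfl) fun k _ => deviationEnv_of_playPrefix W (k + 1)

theorem playPrefix_deviationEnv_cases (W : ℕ → List A → B) (σa' : List B → A) :
    (∀ n, playPrefix σa' (deviationEnv σa σe W) n = playPrefix σa σe n) ∨
    ∃ j, ∀ k, playPrefix σa' (deviationEnv σa σe W) (j + k) = playPrefix σa σe j ++
      playPrefix (strategyAfter σa' ((playPrefix σa σe j).map Prod.snd)) (W j) k := by
  classical
  by_cases hagree : ∀ j, (play σa' (deviationEnv σa σe W) j).1 = (play σa σe j).1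
  · exact Or.inl fun n => playPrefix_deviationEnv_of_agree W fun j _ => hagree j
  right
  have hdev : ∃ j, (play σa' (deviationEnv σa σe W) j).1 ≠ (play σa σe j).1 := not_forall.mp hagree
  set j := Nat.find hdev
  have hP : playPrefix σa' (deviationEnv σa σe W) j = playPrefix σa σe j :=
    playPrefix_deviationEnv_of_agree W fun i hi => not_not.mp (Nat.find_min hdev hi)
  have hAj : ((playPrefix σa σe j).map Prod.fst).length = j := by simp
  refine ⟨j, fun k => ?_⟩
  rw [playPrefix_add, hP]
  refine congrArg _ (playPrefix_congr (fun _ _ => rfl) fun i _ => ?_)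
  set q := (playPrefix (strategyAfter σa' ((playPrefix σa σe j).map Prod.snd)) (W j) (i + 1)).map
    Prod.fst
  have hqj : ((playPrefix σa σe j).map Prod.fst ++ q)[j]? =
      some (play σa' (deviationEnv σa σe W) j).1 := by
    rw [List.getElem?_append_right hAj.le, hAj, Nat.sub_self,
      getElem?_map_fst_playPrefix _ _ (Nat.succ_pos i)]
    simp [play, hP, strategyAfter, playPrefix]
  have hex : ∃ j', ∃ a ∈ ((playPrefix σa σe j).map Prod.fst ++ q)[j']?, a ≠ (play σa σe j').1 :=
    ⟨j, _, hqj, Nat.find_spec hdev⟩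
  have hfind : Nat.find hex = j := by
    refine (Nat.find_eq_iff hex).mpr ⟨⟨_, hqj, Nat.find_spec hdev⟩, fun i hi => ?_⟩
    rintro ⟨a, ha, hne⟩
    rw [List.getElem?_append_left (by omega), getElem?_map_fst_playPrefix _ _ hi,
      Option.mem_some_iff] at ha
    exact hne ha.symm
  change dite _ _ _ = _
  rw [dif_pos hex, hfind, List.drop_left' hAj]

end Deviation

section SafeEnv

variable {Q : Type} {M : DFA (A × B) Q} {q : Q} {σa : List B → A} {σe : List A → B}

theorem exists_isSafeEnvStrategy_play_eq (h : ∀ k, ¬ BadFrom M q (playPrefix σa σe k)) :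
    ∃ σe', IsSafeEnvStrategy M q σe' ∧ play σa σe' = play σa σe := by
  have hs : ∀ k, 1 ≤ k → M.evalFrom q (playPrefix σa σe k) ∈ M.accept := fun k hk =>
    (not_badFrom_iff.mp (h k)).2 (playPrefix_ne_nil σa σe hk)
  choose W hW using fun k => envWinsSafeFrom_iff.mp (not_badFrom_iff.mp (h k)).1
  refine ⟨deviationEnv σa σe W, fun σa' k hk => ?_, play_deviationEnv W⟩
  rcases playPrefix_deviationEnv_cases W σa' with hsame | ⟨j, hj⟩
  · rw [hsame k]
    exact hs k hk
  rcases le_or_gt k j with hkj | hjk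
  · rw [← playPrefix_take _ _ hkj, ← add_zero j, hj, playPrefix, List.append_nil,
      playPrefix_take _ _ hkj]
    exact hs k hk
  · obtain ⟨d, rfl⟩ := Nat.exists_eq_add_of_lt hjk
    rw [add_assoc, hj, DFA.evalFrom_of_append]
    exact hW j _ _ (by omega)

theorem exists_forall_not_badFrom_playPrefix_eq {n : ℕ}
    (h : ∀ k ≤ n, ¬ BadFrom M q (playPrefix σa σe k)) :
    ∃ σe', (∀ k, ¬ BadFrom M q (playPrefix σa σe' k)) ∧
      playPrefix σa σe' n = playPrefix σa σe n := by
  obtain ⟨τ, hτ⟩ := envWinsSafeFrom_iff.mp (not_badFrom_iff.mp (h n le_rfl)).1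
  refine ⟨spliceEnv σe n τ, fun k => ?_, playPrefix_spliceEnv_of_le σa σe τ le_rfl⟩
  rcases le_or_gt k n with hkn | hnk
  · rw [playPrefix_spliceEnv_of_le σa σe τ hkn]
    exact h k hkn
  · obtain ⟨d, rfl⟩ := Nat.exists_eq_add_of_lt hnk
    rw [add_assoc, playPrefix_spliceEnv_add, badFrom_append_iff (playPrefix_ne_nil _ _ (by omega))]
    exact hτ.not_badFrom _ _

theorem exists_isSafeEnvStrategy_playPrefix_eq {n : ℕ}
    (h : ∀ k ≤ n, ¬ BadFrom M q (playPrefix σa σe k)) :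
    ∃ σe', IsSafeEnvStrategy M q σe' ∧ playPrefix σa σe' n = playPrefix σa σe n := by
  obtain ⟨σe₁, h₁, hn₁⟩ := exists_forall_not_badFrom_playPrefix_eq h
  obtain ⟨σe₂, h₂, hplay⟩ := exists_isSafeEnvStrategy_play_eq h₁
  refine ⟨σe₂, h₂, ?_⟩
  rw [← pre_play, hplay, pre_play, hn₁]

end SafeEnv

section Switch

variable (σa : List B → A) (σe : List A → B)

/-- The history of the play of `σa` against the environment moves `l`. -/
def replay (l : List B) : List (A × B) := l.mapIdx fun i b => (σa (l.take i), b)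

theorem replay_playPrefix (n : ℕ) :
    replay σa ((playPrefix σa σe n).map Prod.snd) = playPrefix σa σe n := by
  refine List.ext_getElem (by simp [replay]) fun i h₁ h₂ => ?_
  have hi : i < n := by simpa using h₂
  have hget : (playPrefix σa σe n)[i] = play σa σe i := by
    simp only [← pre_play, pre, List.getElem_map, List.getElem_range]
  simp only [replay, List.getElem_mapIdx, List.getElem_map, hget, ← List.map_take,
    playPrefix_take _ _ hi.le]
  rfl

theorem replay_take {n j : ℕ} (l : List B) (h : j ≤ n) :
    replay σa (((playPrefix σa σe n).map Prod.snd ++ l).take j) = playPrefix σa σe j := by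
  rw [List.take_append_of_le_length (by simpa), ← List.map_take, playPrefix_take _ _ h,
    replay_playPrefix]

open Classical in
/-- Play `σa` until the first time at which the history `h` satisfies `C`, then `W h` on the
environment's moves from that time on. -/
noncomputable def switchAg (C : List (A × B) → Prop) (W : List (A × B) → List B → A) :
    List B → A := fun l =>
  if h : ∃ m ≤ l.length, C (replay σa (l.take m)) then
    W (replay σa (l.take (Nat.find h))) (l.drop (Nat.find h))
  else σa l

variable {σa σe}

theorem playPrefix_switchAg {C : List (A × B) → Prop} (W : List (A × B) → List B → A) {m : ℕ}
    (hm : C (playPrefix σa σe m)) (hmin : ∀ j < m, ¬ C (playPrefix σa σe j)) (k : ℕ) :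
    playPrefix (switchAg σa C W) σe (m + k) = playPrefix σa σe m ++
      playPrefix (W (playPrefix σa σe m)) (strategyAfter σe ((playPrefix σa σe m).map Prod.fst))
        k := by
  classical
  have hpre : playPrefix (switchAg σa C W) σe m = playPrefix σa σe m := by
    refine playPrefix_congr (fun j hj => dif_neg ?_) fun _ _ => rfl
    rintro ⟨i, hi, hC⟩
    have := replay_take σa σe [] (by simpa using hi : i ≤ j)
    rw [List.append_nil] at this
    exact hmin i (by simp at hi; omega) (this ▸ hC)
  have hafter : strategyAfter (switchAg σa C W) ((playPrefix σa σe m).map Prod.snd) =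
      W (playPrefix σa σe m) := by
    funext l
    have hex : ∃ i ≤ ((playPrefix σa σe m).map Prod.snd ++ l).length,
        C (replay σa (((playPrefix σa σe m).map Prod.snd ++ l).take i)) :=
      ⟨m, by simp, by rwa [replay_take _ _ _ le_rfl]⟩
    have hfind : Nat.find hex = m := by
      refine (Nat.find_eq_iff hex).mpr ⟨⟨by simp, by rwa [replay_take _ _ _ le_rfl]⟩, ?_⟩
      rintro i hi ⟨-, hC⟩
      exact hmin i hi (by rwa [replay_take _ _ _ hi.le] at hC)
    change dite _ _ _ = _
    rw [dif_pos hex, hfind, replay_take _ _ _ le_rfl, List.drop_left' (by simp)]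
  rw [playPrefix_add, hpre, hafter]

end Switch

section Task

variable {Q₂ Q₃ : Type} {M₂ : DFA (A × B) Q₂} {M₃ : DFA (A × B) Q₃}

def nonemptyAccepts {α Q : Type} (M : DFA α Q) : Set (List α) := {w | w ≠ [] ∧ w ∈ M.accepts}

theorem playPrefix_mem_nonemptyAccepts_iff {Q : Type} {M : DFA (A × B) Q} {σa : List B → A}
    {σe : List A → B} {k : ℕ} (hk : 1 ≤ k) :
    playPrefix σa σe k ∈ nonemptyAccepts M ↔ M.eval (playPrefix σa σe k) ∈ M.accept :=
  and_iff_right (playPrefix_ne_nil σa σe hk)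

theorem envEnforces_safe_nonemptyAccepts_iff {Q : Type} {M : DFA (A × B) Q} {σe : List A → B} :
    EnvEnforces σe (Safe (nonemptyAccepts M)) ↔ IsSafeEnvStrategy M M.start σe := by
  refine forall_congr' fun σa => forall₂_congr fun k hk => ?_
  rw [pre_play, playPrefix_mem_nonemptyAccepts_iff hk]
  rfl

def IsAgentSafeStrategy (M₂ : DFA (A × B) Q₂) (M₃ : DFA (A × B) Q₃) (q₂ : Q₂) (q₃ : Q₃)
    (σa : List B → A) : Prop :=
  ∀ σe : List A → B, ∀ m, 1 ≤ m →
    M₂.evalFrom q₂ (playPrefix σa σe m) ∈ M₂.accept ∨ ∃ k ≤ m, BadFrom M₃ q₃ (playPrefix σa σe k)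

theorem agentSafeUnder_iff {q₂ : Q₂} {q₃ : Q₃} :
    AgentSafeUnder M₂ M₃ q₂ q₃ ↔ ∃ σa, IsAgentSafeStrategy M₂ M₃ q₂ q₃ σa := by
  simp only [AgentSafeUnder, IsAgentSafeStrategy, pre_play,
    badFrom_iff_of_length_eq (length_playPrefix _ _ _)]

def GoodPrefix (T₁ : Set (List (A × B))) (M₂ : DFA (A × B) Q₂) (M₃ : DFA (A × B) Q₃)
    (h : List (A × B)) : Prop :=
  1 ≤ h.length ∧ h ∈ T₁ ∧ (∀ j, 1 ≤ j → j ≤ h.length → h.take j ∈ nonemptyAccepts M₂) ∧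
    AgentSafeUnder M₂ M₃ (M₂.eval h) (M₃.eval h)

theorem goodPrefix_pre_play_iff {T₁ : Set (List (A × B))} {σa : List B → A} {σe : List A → B}
    {m : ℕ} :
    GoodPrefix T₁ M₂ M₃ (pre (play σa σe) m) ↔
      1 ≤ m ∧ pre (play σa σe) m ∈ T₁ ∧
        (∀ j, 1 ≤ j → j ≤ m → pre (play σa σe) j ∈ nonemptyAccepts M₂) ∧
        AgentSafeUnder M₂ M₃ (M₂.eval (pre (play σa σe) m)) (M₃.eval (pre (play σa σe) m)) := by
  simp only [GoodPrefix, pre_play, length_playPrefix]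
  refine and_congr_right' (and_congr_right' (and_congr_left' ?_))
  exact forall_congr' fun j => forall₂_congr fun _ hj => by rw [playPrefix_take _ _ hj]

theorem isAgentSafeStrategy_strategyAfter {σag : List B → A}
    (hσ : EnforcesUnder σag (Safe (nonemptyAccepts M₂)) (Safe (nonemptyAccepts M₃)))
    {σenv : List A → B} {m₀ : ℕ} (h : ∀ k ≤ m₀, ¬ BadFrom M₃ M₃.start (playPrefix σag σenv k)) :
    IsAgentSafeStrategy M₂ M₃ (M₂.eval (playPrefix σag σenv m₀)) (M₃.eval (playPrefix σag σenv m₀))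
      (strategyAfter σag ((playPrefix σag σenv m₀).map Prod.snd)) := by
  intro τ m hm
  refine or_iff_not_imp_right.mpr fun hgood => ?_
  push Not at hgood
  have hspliced : ∀ k ≤ m₀ + m, ¬ BadFrom M₃ M₃.start (playPrefix σag (spliceEnv σenv m₀ τ) k) := by
    intro k hk
    rcases le_or_gt k m₀ with hkm | hmk
    · rw [playPrefix_spliceEnv_of_le _ _ _ hkm]
      exact h k hkm
    · obtain ⟨d, rfl⟩ := Nat.exists_eq_add_of_lt hmk
      rw [add_assoc, playPrefix_spliceEnv_add,
        badFrom_append_iff (playPrefix_ne_nil _ _ (by omega))]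
      exact hgood (d + 1) (by omega)
  obtain ⟨σe, hsafe, heq⟩ := exists_isSafeEnvStrategy_playPrefix_eq hspliced
  have := hσ σe (envEnforces_safe_nonemptyAccepts_iff.mpr hsafe) (m₀ + m) (by omega)
  rwa [pre_play, playPrefix_mem_nonemptyAccepts_iff (by omega), heq, playPrefix_spliceEnv_add,
    DFA.eval, DFA.evalFrom_of_append] at this

theorem eval_mem_accept_of_isAgentSafeStrategy {σa τ : List B → A} {σe τe : List A → B}
    {u : List (A × B)} {n m : ℕ} (hsafe : IsSafeEnvStrategy M₃ M₃.start σe)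
    (hsplit : ∀ k, playPrefix σa σe (n + k) = u ++ playPrefix τ τe k)
    (hτ : IsAgentSafeStrategy M₂ M₃ (M₂.eval u) (M₃.eval u) τ) (hm : 1 ≤ m) :
    M₂.eval (playPrefix σa σe (n + m)) ∈ M₂.accept := by
  rcases hτ τe m hm with hacc | ⟨k, -, hbad⟩
  · rwa [hsplit, DFA.eval, DFA.evalFrom_of_append]
  · have := badFrom_append_of_badFrom hbad
    rw [← hsplit] at this
    exact absurd this (hsafe.not_badFrom σa (n + k))

variable {T₁ : Set (List (A × B))} {σag : List B → A}

theorem exists_badAt_or_goodPrefix_of_enforcesUnder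
    (hσ : EnforcesUnder σag (Reach T₁ ∩ Safe (nonemptyAccepts M₂)) (Safe (nonemptyAccepts M₃)))
    (σenv : List A → B) :
    ∃ m, (∃ k ≤ m, BadAt M₃ (play σag σenv) k) ∨ GoodPrefix T₁ M₂ M₃ (pre (play σag σenv) m) := by
  by_cases hbad : ∃ k, BadAt M₃ (play σag σenv) k
  · obtain ⟨k, hk⟩ := hbad
    exact ⟨k, Or.inl ⟨k, le_rfl, hk⟩⟩
  have hnb : ∀ k, ¬ BadFrom M₃ M₃.start (playPrefix σag σenv k) := fun k hk =>
    hbad ⟨k, badAt_iff_badFrom.mpr (by rwa [pre_play])⟩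
  obtain ⟨σe, hsafe, hplay⟩ := exists_isSafeEnvStrategy_play_eq hnb
  obtain ⟨⟨m, hm, hT₁⟩, hT₂⟩ := hplay ▸ hσ σe (envEnforces_safe_nonemptyAccepts_iff.mpr hsafe)
  refine ⟨m, Or.inr (goodPrefix_pre_play_iff.mpr ⟨hm, hT₁, fun j hj _ => hT₂ j hj, ?_⟩)⟩
  rw [pre_play, agentSafeUnder_iff]
  exact ⟨_, isAgentSafeStrategy_strategyAfter (fun σe he => (hσ σe he).2) fun k _ => hnb k⟩

theorem exists_enforcesUnder_of_exists_badAt_or_goodPrefix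
    (h : ∀ σenv : List A → B, ∃ m,
      (∃ k ≤ m, BadAt M₃ (play σag σenv) k) ∨ GoodPrefix T₁ M₂ M₃ (pre (play σag σenv) m)) :
    ∃ σ, EnforcesUnder σ (Reach T₁ ∩ Safe (nonemptyAccepts M₂)) (Safe (nonemptyAccepts M₃)) := by
  classical
  have hW : ∀ u, ∃ τ, AgentSafeUnder M₂ M₃ (M₂.eval u) (M₃.eval u) →
      IsAgentSafeStrategy M₂ M₃ (M₂.eval u) (M₃.eval u) τ := fun u =>
    if hu : AgentSafeUnder M₂ M₃ (M₂.eval u) (M₃.eval u) then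
      (agentSafeUnder_iff.mp hu).imp fun _ hτ _ => hτ
    else ⟨σag, fun hu' => absurd hu' hu⟩
  choose W hW using hW
  refine ⟨switchAg σag (GoodPrefix T₁ M₂ M₃) W, fun σenv henv => ?_⟩
  have hsafe := envEnforces_safe_nonemptyAccepts_iff.mp henv
  have hgood : ∃ m, GoodPrefix T₁ M₂ M₃ (playPrefix σag σenv m) := by
    obtain ⟨m, ⟨k, -, hk⟩ | hm⟩ := h σenv
    · rw [badAt_iff_badFrom, pre_play] at hk
      exact absurd hk (hsafe.not_badFrom σag k)
    · exact ⟨m, by rwa [pre_play] at hm⟩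
  obtain ⟨hlen, hT₁, hT₂, hASU⟩ := Nat.find_spec hgood
  have hsplit := playPrefix_switchAg W (Nat.find_spec hgood) fun j hj => Nat.find_min hgood hj
  have hstart := hsplit 0
  rw [add_zero, playPrefix, List.append_nil] at hstart
  refine ⟨⟨Nat.find hgood, by simpa using hlen, by rwa [pre_play, hstart]⟩, fun k hk => ?_⟩
  rw [pre_play, playPrefix_mem_nonemptyAccepts_iff hk]
  rcases le_or_gt k (Nat.find hgood) with hkm | hmk
  · rw [← playPrefix_take _ _ hkm, hstart]
    exact (hT₂ k hk (by simpa using hkm)).2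
  · obtain ⟨d, rfl⟩ := Nat.exists_eq_add_of_lt hmk
    rw [add_assoc]
    exact eval_mem_accept_of_isAgentSafeStrategy hsafe hsplit (hW _ hASU) (by omega)

end Task

end Games

theorem alg6_correctness_general {A B Q₂ Q₃ : Type}
    (T₁ : Set (List (A × B)))
    (M₂ : DFA (A × B) Q₂) (M₃ : DFA (A × B) Q₃)
    (T₂ : Set (List (A × B))) (hT₂ : T₂ = {w | w ≠ [] ∧ w ∈ M₂.accepts})
    (T₃ : Set (List (A × B))) (hT₃ : T₃ = {w | w ≠ [] ∧ w ∈ M₃.accepts}) :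
    (∃ σag : List B → A, EnforcesUnder σag (Reach T₁ ∩ Safe T₂) (Safe T₃)) ↔
      (∃ σag : List B → A, ∀ σenv : List A → B, ∃ m : ℕ,
        (∃ k : ℕ, k ≤ m ∧ BadAt M₃ (play σag σenv) k) ∨
        (1 ≤ m ∧ pre (play σag σenv) m ∈ T₁ ∧
          (∀ j, 1 ≤ j → j ≤ m → pre (play σag σenv) j ∈ T₂) ∧
          AgentSafeUnder M₂ M₃ (M₂.eval (pre (play σag σenv) m))
            (M₃.eval (pre (play σag σenv) m)))) := by
  subst hT₂ hT₃
  constructor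
  · rintro ⟨σag, hσ⟩
    refine ⟨σag, fun σenv => ?_⟩
    obtain ⟨m, hm⟩ := exists_badAt_or_goodPrefix_of_enforcesUnder hσ σenv
    exact ⟨m, hm.imp_right goodPrefix_pre_play_iff.mp⟩
  · rintro ⟨σag, hσ⟩
    exact exists_enforcesUnder_of_exists_badAt_or_goodPrefix fun σenv =>
      (hσ σenv).imp fun _ => Or.imp_right goodPrefix_pre_play_iff.mpr

/-- Semantic correctness of Algorithm 6 (conjunction of reachability and
safety tasks under a safety environment specification): the agent can enforce
`Reach T₁ ∩ Safe T₂` under `Safe T₃` iff it has a strategy such that against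
every environment strategy there is a time `m` at which either the environment
specification has already been violated, or (`m ≥ 1`, the prefix of the play is
in `T₁`, all prefixes up to time `m` are in `T₂`, and from the pair of states
reached in `M₂` and `M₃` the agent can stay safe for `T₂` under `Safe T₃`). -/
theorem alg6_correctness {A B Q₂ Q₃ : Type}
    [Fintype A] [Fintype B] [Nonempty A] [Nonempty B] [Fintype Q₂] [Fintype Q₃]
    (T₁ : Set (List (A × B)))
    (M₂ : DFA (A × B) Q₂) (M₃ : DFA (A × B) Q₃)
    (T₂ : Set (List (A × B))) (hT₂ : T₂ = {w | w ≠ [] ∧ w ∈ M₂.accepts})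
    (T₃ : Set (List (A × B))) (hT₃ : T₃ = {w | w ≠ [] ∧ w ∈ M₃.accepts}) :
    (∃ σag : List B → A, EnforcesUnder σag (Reach T₁ ∩ Safe T₂) (Safe T₃)) ↔
      (∃ σag : List B → A, ∀ σenv : List A → B, ∃ m : ℕ,
        (∃ k : ℕ, k ≤ m ∧ BadAt M₃ (play σag σenv) k) ∨
        (1 ≤ m ∧ pre (play σag σenv) m ∈ T₁ ∧
          (∀ j, 1 ≤ j → j ≤ m → pre (play σag σenv) j ∈ T₂) ∧
          AgentSafeUnder M₂ M₃ (M₂.eval (pre (play σag σenv) m))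
            (M₃.eval (pre (play σag σenv) m)))) :=
  alg6_correctness_general T₁ M₂ M₃ T₂ hT₂ T₃ hT₃
end

section
/- Finite-state strategies suffice for synthesis under environment specifications with reachability and safety properties: let E₁, E₂, T₁, T₂ be sets of nonempty finite words over A × B, each of which is the set of nonempty words accepted by some DFA over A × B with a finite state type. If there exists an agent strategy enforcing Reach T₁ ∩ Safe T₂ under the environment specification Reach E₁ ∩ Safe E₂, then there exists a finite-state agent strategy enforcing Reach T₁ ∩ Safe T₂ under the environment specification Reach E₁ ∩ Safe E₂. -/
/-- An agent strategy is finite-state if it is computed by a finite-state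
input/output automaton: a finite type `S` of states, an initial state `s0`,
an update function `u`, and an output function `o`. -/
def FiniteStateStrategy {A B : Type} (σag : List B → A) : Prop :=
  ∃ (S : Type) (_ : Fintype S) (s0 : S) (u : S → B → S) (o : S → A),
    ∀ h : List B, σag h = o (List.foldl u s0 h)

open Filter

namespace Synthesis

variable {A B : Type}

section Plays

theorem pre_succ {α : Type} (π : ℕ → α) (k : ℕ) : pre π (k + 1) = pre π k ++ [π k] := by
  simp [pre, List.range_succ]

@[simp]
theorem length_pre {α : Type} (π : ℕ → α) (k : ℕ) : (pre π k).length = k := by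
  simp [pre]

theorem pre_add {α : Type} (π : ℕ → α) (n m : ℕ) :
    pre π (n + m) = pre π n ++ pre (fun i => π (n + i)) m := by
  simp [pre, List.range_add]

theorem pre_play (σ : List B → A) (τ : List A → B) (k : ℕ) :
    pre (play σ τ) k = playPrefix σ τ k := by
  induction k with
  | zero => rfl
  | succ k ih => rw [pre_succ, ih]; rfl

theorem play_fst (σ : List B → A) (τ : List A → B) (k : ℕ) :
    (play σ τ k).1 = σ ((pre (play σ τ) k).map Prod.snd) := by
  rw [pre_play]; rfl

theorem play_snd (σ : List B → A) (τ : List A → B) (k : ℕ) :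
    (play σ τ k).2 = τ ((pre (play σ τ) (k + 1)).map Prod.fst) := by
  rw [pre_succ, pre_play, List.map_append]; rfl

theorem pre_play_eq_of_consistent {σ : List B → A} {τ : List A → B} {π : ℕ → A × B} {n : ℕ}
    (hσ : ∀ k < n, σ ((pre π k).map Prod.snd) = (π k).1)
    (hτ : ∀ k < n, τ ((pre π (k + 1)).map Prod.fst) = (π k).2) :
    pre (play σ τ) n = pre π n := by
  induction n with
  | zero => rfl
  | succ n ih =>
    have ih := ih (fun k hk => hσ k (by omega)) (fun k hk => hτ k (by omega))
    have h₁ : (play σ τ n).1 = (π n).1 := by rw [play_fst, ih, hσ n (by omega)]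
    have h₂ : (play σ τ n).2 = (π n).2 := by
      rw [play_snd, pre_succ, ih, ← hτ n (by omega), pre_succ]
      simp [h₁]
    rw [pre_succ, pre_succ, ih, Prod.ext h₁ h₂]

theorem play_eq_of_consistent {σ : List B → A} {τ : List A → B} {π : ℕ → A × B}
    (hσ : ∀ k, σ ((pre π k).map Prod.snd) = (π k).1)
    (hτ : ∀ k, τ ((pre π (k + 1)).map Prod.fst) = (π k).2) :
    play σ τ = π := by
  funext k
  have h := pre_play_eq_of_consistent (n := k + 1) (fun k _ => hσ k) (fun k _ => hτ k)
  rw [pre_succ, pre_succ] at h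
  exact List.singleton_injective (List.append_inj' h rfl).2

def agentAfter (w : List (A × B)) (σ : List B → A) : List B → A :=
  fun h => σ (w.map Prod.snd ++ h)

def envAfter (w : List (A × B)) (τ : List A → B) : List A → B :=
  fun l => τ (w.map Prod.fst ++ l)

theorem play_add (σ : List B → A) (τ : List A → B) (n : ℕ) :
    (fun m => play σ τ (n + m)) =
      play (agentAfter (pre (play σ τ) n) σ) (envAfter (pre (play σ τ) n) τ) := by
  refine (play_eq_of_consistent (fun k => ?_) fun k => ?_).symm
  · simp only [agentAfter, ← List.map_append, ← pre_add, ← play_fst]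
  · simp only [envAfter, ← List.map_append, ← pre_add]
    exact (play_snd σ τ (n + k)).symm

end Plays

section Monitors

variable {S S' : Type} (δ : S → A × B → S) (δ' : S' → A × B → S')

def stateAfter (s : S) (π : ℕ → A × B) (k : ℕ) : S := (pre π k).foldl δ s

@[simp]
theorem stateAfter_zero (s : S) (π : ℕ → A × B) : stateAfter δ s π 0 = s := rfl

theorem stateAfter_succ (s : S) (π : ℕ → A × B) (k : ℕ) :
    stateAfter δ s π (k + 1) = δ (stateAfter δ s π k) (π k) := by
  simp [stateAfter, pre_succ]

theorem stateAfter_add (s : S) (π : ℕ → A × B) (n m : ℕ) :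
    stateAfter δ s π (n + m) = stateAfter δ (stateAfter δ s π n) (fun i => π (n + i)) m := by
  simp [stateAfter, pre_add]

def Absorbing (R : Set S) : Prop := ∀ s x, s ∈ R → δ s x ∈ R

def visits (s : S) (R : Set S) : Set (ℕ → A × B) := {π | ∃ k, stateAfter δ s π k ∈ R}

def reachAvoid (s : S) (R Bad : Set S) : Set (ℕ → A × B) := visits δ s R ∩ (visits δ s Bad)ᶜ

def prodStep (p : S × S') (x : A × B) : S × S' := (δ p.1 x, δ' p.2 x)

open Classical in
noncomputable def hitStep (P : Set S) (p : S × Bool) (x : A × B) : S × Bool :=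
  (δ p.1 x, p.2 || decide (δ p.1 x ∈ P))

variable {δ δ'}

theorem Absorbing.stateAfter_mem {R : Set S} (hR : Absorbing δ R) {s : S} {π : ℕ → A × B}
    {j k : ℕ} (h : stateAfter δ s π j ∈ R) (hjk : j ≤ k) : stateAfter δ s π k ∈ R := by
  induction k, hjk using Nat.le_induction with
  | base => exact h
  | succ k _ ih => rw [stateAfter_succ]; exact hR _ _ ih

theorem Absorbing.prodStep_fst {R : Set S} (h : Absorbing δ R) :
    Absorbing (prodStep δ δ') {p | p.1 ∈ R} :=
  fun _ _ hp => h _ _ hp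

theorem Absorbing.prodStep_snd {R : Set S'} (h : Absorbing δ' R) :
    Absorbing (prodStep δ δ') {p | p.2 ∈ R} :=
  fun _ _ hp => h _ _ hp

theorem absorbing_hitStep_snd (P : Set S) : Absorbing (hitStep δ P) {p | p.2 = true} := by
  intro p x hp
  simp [hitStep, Set.mem_ofPred_eq.mp hp]

variable (δ δ')

theorem stateAfter_prodStep (s : S) (s' : S') (π : ℕ → A × B) (k : ℕ) :
    stateAfter (prodStep δ δ') (s, s') π k = (stateAfter δ s π k, stateAfter δ' s' π k) := by
  induction k with
  | zero => rfl
  | succ k ih => simp only [stateAfter_succ, ih, prodStep]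

theorem stateAfter_hitStep_fst (P : Set S) (s : S) (f : Bool) (π : ℕ → A × B) (k : ℕ) :
    (stateAfter (hitStep δ P) (s, f) π k).1 = stateAfter δ s π k := by
  induction k with
  | zero => rfl
  | succ k ih => simp only [stateAfter_succ, hitStep, ih]

theorem stateAfter_hitStep_snd (P : Set S) (s : S) (f : Bool) (π : ℕ → A × B) (k : ℕ) :
    (stateAfter (hitStep δ P) (s, f) π k).2 = true ↔
      f = true ∨ ∃ n < k, stateAfter δ s π (n + 1) ∈ P := by
  induction k with
  | zero => simp
  | succ k ih =>
    rw [stateAfter_succ, hitStep, stateAfter_hitStep_fst, Bool.or_eq_true, ih,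
      Nat.exists_lt_succ_right, or_assoc, stateAfter_succ]
    simp only [decide_eq_true_eq]

theorem stateAfter_hitStep_snd_of_iff (P : Set S) (s : S) {f : Bool} (hf : f = true ↔ s ∈ P)
    (π : ℕ → A × B) (k : ℕ) :
    (stateAfter (hitStep δ P) (s, f) π k).2 = true ↔ ∃ n ≤ k, stateAfter δ s π n ∈ P := by
  simp only [stateAfter_hitStep_snd, hf, ← Nat.lt_succ_iff, Nat.exists_lt_succ_left]
  rfl

end Monitors

section Attractors

variable {S : Type} (δ : S → A × B → S)

def cpreAgent (X : Set S) : Set S := {s | ∃ a, ∀ b, δ s (a, b) ∈ X}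

def cpreEnv (X : Set S) : Set S := {s | ∀ a, ∃ b, δ s (a, b) ∈ X}

theorem monotone_cpreAgent : Monotone (cpreAgent δ) :=
  fun _ _ hXY _ ⟨a, ha⟩ => ⟨a, fun b => hXY (ha b)⟩

theorem monotone_cpreEnv : Monotone (cpreEnv δ) :=
  fun _ _ hXY _ hs a => (hs a).imp fun _ hb => hXY hb

theorem cpreAgent_iUnion_subset [Finite B] {X : ℕ → Set S} (hX : Monotone X) :
    cpreAgent δ (⋃ n, X n) ⊆ ⋃ n, cpreAgent δ (X n) := by
  rintro s ⟨a, ha⟩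
  choose n hn using fun b => Set.mem_iUnion.1 (ha b)
  obtain ⟨N, hN⟩ := Finite.exists_le n
  exact Set.mem_iUnion.2 ⟨N, a, fun b => hX (hN b) (hn b)⟩

theorem cpreEnv_iUnion_subset [Finite A] {X : ℕ → Set S} (hX : Monotone X) :
    cpreEnv δ (⋃ n, X n) ⊆ ⋃ n, cpreEnv δ (X n) := by
  intro s hs
  choose b n hn using fun a => (hs a).imp fun _ hb => Set.mem_iUnion.1 hb
  obtain ⟨N, hN⟩ := Finite.exists_le n
  exact Set.mem_iUnion.2 ⟨N, fun a => ⟨b a, hX (hN a) (hn a)⟩⟩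

variable (cpre : Set S → Set S) (C T : Set S)

def attr : ℕ → Set S
  | 0 => T
  | n + 1 => T ∪ (C ∩ cpre (attr n))

/-- `0` if `s` lies in no `attr cpre C T n`. -/
noncomputable def attrRank (s : S) : ℕ := sInf {n | s ∈ attr cpre C T n}

variable {cpre C T}

theorem attr_mono (hcpre : Monotone cpre) : Monotone (attr cpre C T) := by
  refine monotone_nat_of_le_succ fun n => ?_
  induction n with
  | zero => exact Set.subset_union_left
  | succ n ih => exact Set.union_subset_union_right _ (Set.inter_subset_inter_right _ (hcpre ih))

theorem mem_of_mem_attr_of_notMem {s : S} {n : ℕ} (h : s ∈ attr cpre C T n) (hs : s ∉ C) :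
    s ∈ T := by
  cases n with
  | zero => exact h
  | succ n => exact h.resolve_right fun h' => hs h'.1

theorem attrRank_le {s : S} {n : ℕ} (h : s ∈ attr cpre C T n) : attrRank cpre C T s ≤ n :=
  Nat.sInf_le h

theorem exists_attrRank_eq_succ {s : S} {n : ℕ} (h : s ∈ attr cpre C T n) (hs : s ∉ T) :
    ∃ m, attrRank cpre C T s = m + 1 ∧ s ∈ cpre (attr cpre C T m) := by
  have hmem : s ∈ attr cpre C T (attrRank cpre C T s) :=
    Nat.sInf_mem (s := {n | s ∈ attr cpre C T n}) ⟨n, h⟩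
  cases hr : attrRank cpre C T s with
  | zero => rw [hr] at hmem; exact absurd hmem hs
  | succ m => rw [hr] at hmem; exact ⟨m, rfl, (hmem.resolve_left hs).2⟩

theorem notMem_cpre_iUnion_attr
    (hcont : cpre (⋃ n, attr cpre C T n) ⊆ ⋃ n, cpre (attr cpre C T n))
    {s : S} (hC : s ∈ C) (hs : ∀ n, s ∉ attr cpre C T n) : s ∉ cpre (⋃ n, attr cpre C T n) := by
  intro h
  obtain ⟨n, hn⟩ := Set.mem_iUnion.1 (hcont h)
  exact hs (n + 1) (Or.inr ⟨hC, hn⟩)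

end Attractors

section WinningRegion

variable {S : Type} (δ : S → A × B → S) (ψ : S → ℕ) (G : Set S)

/-- The winning states of level `n`, given the winning states `W` of the lower levels: in `G`
the agent must avoid the environment's attractor to the losing lower states, outside `G` it must
force a visit to the winning ones. -/
def levelWin (n : ℕ) (W : Set S) : Set S :=
  {s | ψ s = n ∧
    (s ∈ G → ∀ k, s ∉ attr (cpreEnv δ) {t | ψ t = n} ({t | ψ t < n} \ W) k) ∧
    (s ∉ G → ∃ k, s ∈ attr (cpreAgent δ) {t | ψ t = n} W k)}

def winBelow : ℕ → Set S
  | 0 => ∅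
  | n + 1 => winBelow n ∪ levelWin δ ψ G n (winBelow n)

def win : Set S := {s | s ∈ winBelow δ ψ G (ψ s + 1)}

noncomputable def agentRank (s : S) : ℕ :=
  attrRank (cpreAgent δ) {t | ψ t = ψ s} (winBelow δ ψ G (ψ s)) s

noncomputable def envRank (s : S) : ℕ :=
  attrRank (cpreEnv δ) {t | ψ t = ψ s} ({t | ψ t < ψ s} \ winBelow δ ψ G (ψ s)) s

variable {δ ψ G}

theorem lt_of_mem_winBelow {s : S} : ∀ {n}, s ∈ winBelow δ ψ G n → ψ s < n
  | n + 1, .inl h => (lt_of_mem_winBelow h).trans n.lt_succ_self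
  | _ + 1, .inr h => h.1 ▸ Nat.lt_succ_self _

theorem mem_winBelow {s : S} {n : ℕ} : s ∈ winBelow δ ψ G n ↔ ψ s < n ∧ s ∈ win δ ψ G := by
  induction n with
  | zero => simp [winBelow]
  | succ n ih =>
    obtain hlt | heq | hgt := lt_trichotomy (ψ s) n
    · have : s ∉ levelWin δ ψ G n (winBelow δ ψ G n) := fun h => hlt.ne h.1
      simp [winBelow, this, ih, hlt, Nat.lt_succ_of_lt hlt]
    · simp [win, heq]
    · have : s ∉ levelWin δ ψ G n (winBelow δ ψ G n) := fun h => hgt.ne' h.1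
      simp only [winBelow, Set.mem_union, this, or_false, ih]
      omega

theorem mem_win_iff {s : S} :
    s ∈ win δ ψ G ↔ s ∈ levelWin δ ψ G (ψ s) (winBelow δ ψ G (ψ s)) := by
  have : s ∉ winBelow δ ψ G (ψ s) := fun h => (lt_of_mem_winBelow h).false
  simp [win, winBelow, this]

variable (hψ : ∀ s x, ψ (δ s x) ≤ ψ s) (hG : ∀ s x, ψ (δ s x) = ψ s → (δ s x ∈ G ↔ s ∈ G))
include hψ hG

theorem exists_move_of_mem_win [Finite A] {s : S} (hs : s ∈ win δ ψ G) :
    ∃ a, ∀ b, δ s (a, b) ∈ win δ ψ G ∧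
      (s ∉ G → ψ (δ s (a, b)) < ψ s ∨ agentRank δ ψ G (δ s (a, b)) < agentRank δ ψ G s) := by
  obtain ⟨-, hsG, hsG'⟩ := mem_win_iff.1 hs
  by_cases hGs : s ∈ G
  · obtain ⟨a, ha⟩ : ∃ a, ∀ b, δ s (a, b) ∉ ⋃ k, attr (cpreEnv δ) {t | ψ t = ψ s}
        ({t | ψ t < ψ s} \ winBelow δ ψ G (ψ s)) k := by
      simpa [cpreEnv] using notMem_cpre_iUnion_attr (C := {t | ψ t = ψ s})
        (cpreEnv_iUnion_subset δ (attr_mono (monotone_cpreEnv δ))) rfl (hsG hGs)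
    refine ⟨a, fun b => ⟨?_, fun h => absurd hGs h⟩⟩
    simp only [Set.mem_iUnion, not_exists] at ha
    obtain hlt | heq := (hψ s (a, b)).lt_or_eq
    · have := ha b 0
      simp only [attr, Set.mem_sdiff, Set.mem_ofPred_eq, hlt, true_and, not_not] at this
      exact (mem_winBelow.1 this).2
    · exact mem_win_iff.2 ⟨rfl, fun _ => heq ▸ ha b, fun h => absurd ((hG _ _ heq).2 hGs) h⟩
  · obtain ⟨k, hk⟩ := hsG' hGs
    obtain ⟨m, hm, a, ha⟩ := exists_attrRank_eq_succ hk fun h => (lt_of_mem_winBelow h).false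
    refine ⟨a, fun b => ?_⟩
    obtain hlt | heq := (hψ s (a, b)).lt_or_eq
    · exact ⟨(mem_winBelow.1 (mem_of_mem_attr_of_notMem (ha b) hlt.ne)).2, fun _ => Or.inl hlt⟩
    · have hGt : δ s (a, b) ∉ G := fun h => hGs ((hG _ _ heq).1 h)
      refine ⟨mem_win_iff.2 ⟨rfl, fun h => absurd h hGt, fun _ => heq ▸ ⟨m, ha b⟩⟩,
        fun _ => Or.inr ?_⟩
      rw [agentRank, agentRank, hm, heq]
      exact Nat.lt_succ_of_le (attrRank_le (ha b))

theorem exists_response_of_notMem_win [Finite B] {s : S} (hs : s ∉ win δ ψ G) (a : A) :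
    ∃ b, δ s (a, b) ∉ win δ ψ G ∧
      (s ∈ G → ψ (δ s (a, b)) < ψ s ∨ envRank δ ψ G (δ s (a, b)) < envRank δ ψ G s) := by
  rw [mem_win_iff] at hs
  by_cases hGs : s ∈ G
  · obtain ⟨k, hk⟩ : ∃ k, s ∈ attr (cpreEnv δ) {t | ψ t = ψ s}
        ({t | ψ t < ψ s} \ winBelow δ ψ G (ψ s)) k := by
      by_contra h
      exact hs ⟨rfl, fun _ k hk => h ⟨k, hk⟩, fun h' => absurd hGs h'⟩
    obtain ⟨m, hm, hsm⟩ := exists_attrRank_eq_succ hk fun h => lt_irrefl (ψ s) h.1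
    obtain ⟨b, hb⟩ := hsm a
    refine ⟨b, ?_⟩
    obtain hlt | heq := (hψ s (a, b)).lt_or_eq
    · have := mem_of_mem_attr_of_notMem hb hlt.ne
      exact ⟨fun h => this.2 (mem_winBelow.2 ⟨hlt, h⟩), fun _ => Or.inl hlt⟩
    · refine ⟨fun h => (mem_win_iff.1 h).2.1 ((hG _ _ heq).2 hGs) m (heq ▸ hb),
        fun _ => Or.inr ?_⟩
      rw [envRank, envRank, hm, heq]
      exact Nat.lt_succ_of_le (attrRank_le hb)
  · have hout : ∀ k, s ∉ attr (cpreAgent δ) {t | ψ t = ψ s} (winBelow δ ψ G (ψ s)) k :=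
      fun k hk => hs ⟨rfl, fun h => absurd h hGs, fun _ => ⟨k, hk⟩⟩
    obtain ⟨b, hb⟩ : ∃ b, δ s (a, b) ∉ ⋃ k, attr (cpreAgent δ) {t | ψ t = ψ s}
        (winBelow δ ψ G (ψ s)) k := by
      have := notMem_cpre_iUnion_attr (C := {t | ψ t = ψ s})
        (cpreAgent_iUnion_subset δ (attr_mono (monotone_cpreAgent δ))) rfl hout
      simp only [cpreAgent, Set.mem_ofPred_eq, not_exists, not_forall] at this
      exact this a
    refine ⟨b, ?_, fun h => absurd h hGs⟩
    simp only [Set.mem_iUnion, not_exists] at hb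
    obtain hlt | heq := (hψ s (a, b)).lt_or_eq
    · exact fun h => hb 0 (mem_winBelow.2 ⟨hlt, h⟩)
    · intro h
      obtain ⟨k, hk⟩ := (mem_win_iff.1 h).2.2 fun h' => hGs ((hG _ _ heq).1 h')
      exact hb k (heq ▸ hk)

end WinningRegion

section Positional

theorem eventually_of_lex_descent {u v : ℕ → ℕ} {p : ℕ → Prop} (hu : ∀ k, u (k + 1) ≤ u k)
    (hp : ∀ k, u (k + 1) = u k → (p (k + 1) ↔ p k))
    (hdesc : ∀ k, ¬ p k → u (k + 1) < u k ∨ v (k + 1) < v k) : ∀ᶠ k in atTop, p k := by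
  set K := Function.argmin u
  have hconst : ∀ k ≥ K, u k = u K := fun k hk =>
    le_antisymm (antitone_nat_of_succ_le hu hk) (Function.argmin_le u k)
  have hstep : ∀ k ≥ K, p (k + 1) ↔ p k := fun k hk =>
    hp k (by rw [hconst k hk, hconst (k + 1) (by omega)])
  by_cases hpK : p K
  · filter_upwards [eventually_ge_atTop K] with k hk
    induction k, hk using Nat.le_induction with
    | base => exact hpK
    | succ k hk ih => exact (hstep k hk).2 ih
  · have hnp : ∀ k ≥ K, ¬ p k := by
      intro k hk
      induction k, hk using Nat.le_induction with
      | base => exact hpK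
      | succ k hk ih => exact fun h => ih ((hstep k hk).1 h)
    obtain ⟨i, hi⟩ := WellFounded.not_rel_apply_succ (r := (· < ·)) fun i => v (K + i)
    refine absurd ?_ hi
    have := hdesc (K + i) (hnp _ (by omega))
    rw [hconst (K + i) (by omega), hconst (K + i + 1) (by omega)] at this
    simpa [Nat.add_assoc] using this.resolve_left (lt_irrefl _)

variable {S : Type} (δ : S → A × B → S)

def positional (s₀ : S) (m : S → A) : List B → A :=
  fun h => m (h.foldl (fun s b => δ s (m s, b)) s₀)

noncomputable def positionalEnv [Nonempty A] (s₀ : S) (e : S → A → B) : List A → B :=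
  fun l => e (l.dropLast.foldl (fun s a => δ s (a, e s a)) s₀) (l.getLastD (Classical.arbitrary A))

theorem finiteStateStrategy_positional [Fintype S] (s₀ : S) (m : S → A) :
    FiniteStateStrategy (positional δ s₀ m) :=
  ⟨S, inferInstance, s₀, fun s b => δ s (m s, b), m, fun _ => rfl⟩

theorem play_positional_fst (s₀ : S) (m : S → A) (τ : List A → B) (k : ℕ) :
    (play (positional δ s₀ m) τ k).1 = m (stateAfter δ s₀ (play (positional δ s₀ m) τ) k) := by
  set π := play (positional δ s₀ m) τ
  suffices h : ∀ k, ((pre π k).map Prod.snd).foldl (fun s b => δ s (m s, b)) s₀ =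
      stateAfter δ s₀ π k by
    rw [play_fst, ← h]; rfl
  intro k
  induction k with
  | zero => rfl
  | succ k ih =>
    have hk : (π k).1 = m (stateAfter δ s₀ π k) := by rw [play_fst, ← ih]; rfl
    rw [stateAfter_succ, pre_succ, List.map_append, List.foldl_append, ih]
    simp only [List.map_cons, List.map_nil, List.foldl_cons, List.foldl_nil, ← hk]

theorem positionalEnv_concat [Nonempty A] (s₀ : S) (e : S → A → B) (l : List A) (a : A) :
    positionalEnv δ s₀ e (l ++ [a]) = e (l.foldl (fun s a => δ s (a, e s a)) s₀) a := by
  simp [positionalEnv]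

theorem play_positionalEnv_snd [Nonempty A] (s₀ : S) (e : S → A → B) (σ : List B → A) (k : ℕ) :
    (play σ (positionalEnv δ s₀ e) k).2 =
      e (stateAfter δ s₀ (play σ (positionalEnv δ s₀ e)) k)
        (play σ (positionalEnv δ s₀ e) k).1 := by
  set π := play σ (positionalEnv δ s₀ e)
  suffices h : ∀ k, ((pre π k).map Prod.fst).foldl (fun s a => δ s (a, e s a)) s₀ =
      stateAfter δ s₀ π k by
    rw [play_snd, pre_succ, List.map_append, List.map_singleton, positionalEnv_concat, h]
  intro k
  induction k with
  | zero => rfl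
  | succ k ih =>
    have hk : (π k).2 = e (stateAfter δ s₀ π k) (π k).1 := by
      rw [play_snd, pre_succ, List.map_append, List.map_singleton, positionalEnv_concat, ih]
    rw [stateAfter_succ, pre_succ, List.map_append, List.foldl_append, ih]
    simp only [List.map_cons, List.map_nil, List.foldl_cons, List.foldl_nil, ← hk]

variable {δ} {ψ : S → ℕ} {G : Set S}
  (hψ : ∀ s x, ψ (δ s x) ≤ ψ s) (hG : ∀ s x, ψ (δ s x) = ψ s → (δ s x ∈ G ↔ s ∈ G))
include hψ hG

theorem exists_positional_of_mem_win [Finite A] [Nonempty A] {s₀ : S} (hs₀ : s₀ ∈ win δ ψ G) :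
    ∃ m : S → A, ∀ τ, ∀ᶠ k in atTop, stateAfter δ s₀ (play (positional δ s₀ m) τ) k ∈ G := by
  choose! m hm using fun s (hs : s ∈ win δ ψ G) => exists_move_of_mem_win hψ hG hs
  refine ⟨m, fun τ => ?_⟩
  set π := play (positional δ s₀ m) τ
  have hstep : ∀ k, stateAfter δ s₀ π (k + 1) =
      δ (stateAfter δ s₀ π k) (m (stateAfter δ s₀ π k), (π k).2) := fun k => by
    rw [stateAfter_succ, ← play_positional_fst δ s₀ m τ k]
  have hwin : ∀ k, stateAfter δ s₀ π k ∈ win δ ψ G := by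
    intro k
    induction k with
    | zero => exact hs₀
    | succ k ih => rw [hstep]; exact (hm _ ih _).1
  exact eventually_of_lex_descent (u := fun k => ψ (stateAfter δ s₀ π k))
    (v := fun k => agentRank δ ψ G (stateAfter δ s₀ π k))
    (fun k => by simp only [hstep]; exact hψ _ _)
    (fun k hk => by simp only [hstep] at hk ⊢; exact hG _ _ hk)
    (fun k hk => by simp only [hstep]; exact (hm _ (hwin k) _).2 hk)

theorem exists_positionalEnv_of_notMem_win [Finite B] [Nonempty A] [Nonempty B] {s₀ : S}
    (hs₀ : s₀ ∉ win δ ψ G) :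
    ∃ e : S → A → B, ∀ σ, ∀ᶠ k in atTop,
      stateAfter δ s₀ (play σ (positionalEnv δ s₀ e)) k ∉ G := by
  choose! e he using fun s (hs : s ∉ win δ ψ G) => exists_response_of_notMem_win hψ hG hs
  refine ⟨e, fun σ => ?_⟩
  set π := play σ (positionalEnv δ s₀ e)
  have hstep : ∀ k, stateAfter δ s₀ π (k + 1) =
      δ (stateAfter δ s₀ π k) ((π k).1, e (stateAfter δ s₀ π k) (π k).1) := fun k => by
    rw [stateAfter_succ, ← play_positionalEnv_snd δ s₀ e σ k]
  have hlose : ∀ k, stateAfter δ s₀ π k ∉ win δ ψ G := by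
    intro k
    induction k with
    | zero => exact hs₀
    | succ k ih => rw [hstep]; exact (he _ ih _).1
  exact eventually_of_lex_descent (u := fun k => ψ (stateAfter δ s₀ π k))
    (v := fun k => envRank δ ψ G (stateAfter δ s₀ π k))
    (fun k => by simp only [hstep]; exact hψ _ _)
    (fun k hk => by simp only [hstep] at hk ⊢; exact not_congr (hG _ _ hk))
    (fun k hk => by simp only [hstep]; exact (he _ (hlose k) _).2 (not_not.1 hk))

theorem exists_positional_eventually_mem [Finite A] [Finite B] [Nonempty A] [Nonempty B]
    (s₀ : S) (h : ∃ σ : List B → A, ∀ τ, ∀ᶠ k in atTop, stateAfter δ s₀ (play σ τ) k ∈ G) :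
    ∃ m : S → A, ∀ τ, ∀ᶠ k in atTop, stateAfter δ s₀ (play (positional δ s₀ m) τ) k ∈ G := by
  refine exists_positional_of_mem_win hψ hG (by_contra fun hs₀ => ?_)
  obtain ⟨σ, hσ⟩ := h
  obtain ⟨e, he⟩ := exists_positionalEnv_of_notMem_win hψ hG hs₀
  obtain ⟨k, hin, hout⟩ := ((hσ _).and (he σ)).exists
  exact hout hin

end Positional

section EnvironmentWinning

variable {S : Type} {δ : S → A × B → S} {R Bad : Set S}

variable (δ R Bad) in
def envWinning : Set S := {s | ∃ τ : List A → B, EnvEnforces τ (reachAvoid δ s R Bad)}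

theorem notMem_envWinning [Nonempty A] {s : S} (hs : s ∈ Bad) : s ∉ envWinning δ R Bad :=
  fun ⟨_, hτ⟩ => (hτ fun _ => Classical.arbitrary A).2 ⟨0, hs⟩

/-- Witness: `ρ` continued after the history so far; against an agent `α`, use the guarantee of `ρ`
against the agent playing `σ` for `k` rounds and `α` afterwards. -/
theorem stateAfter_mem_envWinning (hR : Absorbing δ R) {s₀ : S} {ρ : List A → B}
    (hρ : EnvEnforces ρ (reachAvoid δ s₀ R Bad)) (σ : List B → A) (k : ℕ) :
    stateAfter δ s₀ (play σ ρ) k ∈ envWinning δ R Bad := by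
  classical
  set w := pre (play σ ρ) k
  refine ⟨envAfter w ρ, fun α => ?_⟩
  let σ' : List B → A := fun h => if h.length < k then σ h else α (h.drop k)
  have hpre : pre (play σ' ρ) k = w := pre_play_eq_of_consistent
    (fun i hi => by simp [σ', hi, play_fst]) (fun i _ => (play_snd σ ρ i).symm)
  have hafter : agentAfter w σ' = α := funext fun h => by simp [agentAfter, σ', w]
  have hstate : ∀ m, stateAfter δ s₀ (play σ' ρ) (k + m) =
      stateAfter δ (stateAfter δ s₀ (play σ ρ) k) (play α (envAfter w ρ)) m := fun m => by
    rw [stateAfter_add, play_add, hpre, hafter]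
    simp only [stateAfter, hpre, w]
  obtain ⟨⟨j, hj⟩, hBad⟩ := hρ σ'
  refine ⟨⟨j, ?_⟩, fun ⟨m, hm⟩ => hBad ⟨k + m, (hstate m).symm ▸ hm⟩⟩
  rw [← hstate]
  exact hR.stateAfter_mem hj (by omega)

open Classical in
/-- Answer as in `π` while the agent's moves agree with those of `π`; from the first round `j` in
which they differ, play `τ' j` on the agent's moves from round `j` on. -/
noncomputable def followThenSwitch (π : ℕ → A × B) (τ' : ℕ → List A → B) (l : List A) : B :=
  if h : ∃ j < l.length, l[j]? ≠ some (π j).1 then τ' (Nat.find h) (l.drop (Nat.find h))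
  else (π (l.length - 1)).2

variable {π : ℕ → A × B} {τ' : ℕ → List A → B}

theorem getElem?_map_fst_pre {j n : ℕ} (hj : j < n) :
    ((pre π n).map Prod.fst)[j]? = some (π j).1 := by
  simp [pre, hj]

theorem followThenSwitch_pre (k : ℕ) :
    followThenSwitch π τ' ((pre π (k + 1)).map Prod.fst) = (π k).2 := by
  rw [followThenSwitch, dif_neg]
  · simp
  · push Not
    intro j hj
    simpa using getElem?_map_fst_pre (π := π) (by simpa using hj)

open Classical in
theorem followThenSwitch_of_deviation {j : ℕ} {q : List A} {a : A} (hq : q[0]? = some a)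
    (ha : a ≠ (π j).1) :
    followThenSwitch π τ' ((pre π j).map Prod.fst ++ q) = τ' j q := by
  set l := (pre π j).map Prod.fst ++ q
  have hlen : ((pre π j).map Prod.fst).length = j := by simp
  have hj : j < l.length ∧ l[j]? ≠ some (π j).1 := by
    have hq' : 0 < q.length := (List.getElem?_eq_some_iff.1 hq).1
    refine ⟨by simp only [l, List.length_append, hlen]; omega, ?_⟩
    rw [List.getElem?_append_right hlen.le, hlen, Nat.sub_self, hq]
    simpa using ha
  have hex : ∃ i < l.length, l[i]? ≠ some (π i).1 := ⟨j, hj⟩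
  have hfind : Nat.find hex = j := (Nat.find_eq_iff hex).2 ⟨hj, fun n hn hdev => hdev.2 (by
    rw [List.getElem?_append_left (by omega), getElem?_map_fst_pre hn])⟩
  rw [followThenSwitch, dif_pos hex, hfind, List.drop_left' hlen]

theorem play_followThenSwitch_of_agree {α : List B → A}
    (hα : ∀ k, α ((pre π k).map Prod.snd) = (π k).1) : play α (followThenSwitch π τ') = π :=
  play_eq_of_consistent hα followThenSwitch_pre

theorem play_followThenSwitch_of_deviation {α : List B → A} {j : ℕ}
    (hα : ∀ k < j, α ((pre π k).map Prod.snd) = (π k).1)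
    (hj : α ((pre π j).map Prod.snd) ≠ (π j).1) :
    (∀ k ≤ j, pre (play α (followThenSwitch π τ')) k = pre π k) ∧
      (fun m => play α (followThenSwitch π τ') (j + m)) =
        play (agentAfter (pre π j) α) (τ' j) := by
  have hpre : ∀ k ≤ j, pre (play α (followThenSwitch π τ')) k = pre π k := fun k hk =>
    pre_play_eq_of_consistent (fun i hi => hα i (by omega)) fun i _ => followThenSwitch_pre i
  refine ⟨hpre, ?_⟩
  rw [play_add, hpre j le_rfl]
  set α' := agentAfter (pre π j) α
  refine play_eq_of_consistent (fun k => (play_fst α' (τ' j) k).symm) fun k => ?_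
  rw [envAfter, play_snd]
  refine followThenSwitch_of_deviation (a := (play α' (τ' j) 0).1) ?_ ?_
  · simp [pre]
  · simpa [play_fst, α', agentAfter, pre] using hj

/-- Witness: `followThenSwitch` along the play, switching to a strategy that enforces the
objective from the state in which the agent deviates. -/
theorem exists_envEnforces_play_eq [Nonempty B] {s₀ : S} {σ : List B → A} {τ : List A → B}
    (hπ : play σ τ ∈ reachAvoid δ s₀ R Bad)
    (hW : ∀ k, stateAfter δ s₀ (play σ τ) k ∈ envWinning δ R Bad) :
    ∃ ρ, EnvEnforces ρ (reachAvoid δ s₀ R Bad) ∧ play σ ρ = play σ τ := by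
  classical
  set π := play σ τ
  choose! τW hτW using fun s (hs : s ∈ envWinning δ R Bad) => hs
  set τ' : ℕ → List A → B := fun j => τW (stateAfter δ s₀ π j)
  refine ⟨followThenSwitch π τ', fun α => ?_,
    play_followThenSwitch_of_agree fun k => (play_fst σ τ k).symm⟩
  by_cases hdev : ∃ j, α ((pre π j).map Prod.snd) ≠ (π j).1
  · obtain ⟨hpre, hshift⟩ := play_followThenSwitch_of_deviation (τ' := τ')
      (fun k hk => not_not.1 (Nat.find_min hdev hk)) (Nat.find_spec hdev)
    set j := Nat.find hdev
    have hstate : ∀ m, stateAfter δ s₀ (play α (followThenSwitch π τ')) (j + m) =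
        stateAfter δ (stateAfter δ s₀ π j) (play (agentAfter (pre π j) α) (τ' j)) m := fun m => by
      rw [stateAfter_add, hshift]
      simp only [stateAfter, hpre j le_rfl]
    obtain ⟨⟨m, hm⟩, hBad⟩ := hτW _ (hW j) (agentAfter (pre π j) α)
    refine ⟨⟨j + m, by rwa [hstate]⟩, fun ⟨k, hk⟩ => ?_⟩
    obtain hkj | hjk := le_total k j
    · simp only [stateAfter, hpre k hkj] at hk
      exact hπ.2 ⟨k, hk⟩
    · obtain ⟨m, rfl⟩ := Nat.exists_eq_add_of_le hjk
      exact hBad ⟨m, by rwa [← hstate]⟩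
  · push Not at hdev
    rw [play_followThenSwitch_of_agree hdev]
    exact hπ

end EnvironmentWinning

section Arena

variable {Se St : Type}

/-- The environment's monitor, with a flag raised once it enters a state from which the
environment cannot enforce its objective, run next to the task monitor. -/
noncomputable def arenaStep (δe : Se → A × B → Se) (δt : St → A × B → St) (Re Be : Set Se) :
    (Se × Bool) × St → A × B → (Se × Bool) × St :=
  prodStep (hitStep δe (envWinning δe Re Be)ᶜ) δt

open Classical in
noncomputable def arenaStart (δe : Se → A × B → Se) (Re Be : Set Se) (se₀ : Se) (st₀ : St) :
    (Se × Bool) × St :=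
  ((se₀, decide (se₀ ∉ envWinning δe Re Be)), st₀)

def arenaGoal (Re : Set Se) (Rt Bt : Set St) : Set ((Se × Bool) × St) :=
  {p | p.1.1 ∈ Re → p.1.2 = false → p.2 ∈ Rt ∧ p.2 ∉ Bt}

open Classical in
/-- Flags only go up and `arenaGoal` depends on the flags alone, so counting the flags still down
gives the levels of a weak game. -/
noncomputable def arenaLevel (Re : Set Se) (Rt Bt : Set St) (p : (Se × Bool) × St) : ℕ :=
  (if p.1.1 ∈ Re then 0 else 1) + (if p.1.2 = true then 0 else 1) +
    (if p.2 ∈ Rt then 0 else 1) + (if p.2 ∈ Bt then 0 else 1)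

variable {δe : Se → A × B → Se} {δt : St → A × B → St} {Re Be : Set Se} {Rt Bt : Set St}
  {se₀ : Se} {st₀ : St}

open Classical in
theorem stateAfter_arena_mem_arenaGoal (π : ℕ → A × B) (k : ℕ) :
    stateAfter (arenaStep δe δt Re Be) (arenaStart δe Re Be se₀ st₀) π k ∈ arenaGoal Re Rt Bt ↔
      (stateAfter δe se₀ π k ∈ Re → (∀ n ≤ k, stateAfter δe se₀ π n ∈ envWinning δe Re Be) →
        stateAfter δt st₀ π k ∈ Rt ∧ stateAfter δt st₀ π k ∉ Bt) := by
  rw [arenaStep, arenaStart, stateAfter_prodStep]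
  have hflag : (stateAfter (hitStep δe (envWinning δe Re Be)ᶜ)
      (se₀, decide (se₀ ∉ envWinning δe Re Be)) π k).2 = false ↔
        ∀ n ≤ k, stateAfter δe se₀ π n ∈ envWinning δe Re Be := by
    rw [Bool.eq_false_iff, ne_eq, stateAfter_hitStep_snd_of_iff δe _ se₀ (by simp)]
    simp
  simp only [arenaGoal, Set.mem_ofPred_eq, stateAfter_hitStep_fst, hflag]

theorem ite_le_ite_of_imp {P Q : Prop} [Decidable P] [Decidable Q] (h : P → Q) :
    (if Q then 0 else 1 : ℕ) ≤ if P then 0 else 1 := by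
  split_ifs <;> simp_all

theorem iff_of_ite_eq_ite {P Q : Prop} [Decidable P] [Decidable Q]
    (h : (if Q then 0 else 1 : ℕ) = if P then 0 else 1) : Q ↔ P := by
  split_ifs at h <;> simp_all

section Level

open Classical

variable (hRe : Absorbing δe Re) (hRt : Absorbing δt Rt) (hBt : Absorbing δt Bt)
  (p : (Se × Bool) × St) (x : A × B)
include hRe hRt hBt

theorem arenaLevel_summands_le :
    ((if (arenaStep δe δt Re Be p x).1.1 ∈ Re then 0 else 1) ≤ if p.1.1 ∈ Re then 0 else 1) ∧
    ((if (arenaStep δe δt Re Be p x).1.2 = true then 0 else 1) ≤ if p.1.2 = true then 0 else 1) ∧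
    ((if (arenaStep δe δt Re Be p x).2 ∈ Rt then 0 else 1) ≤ if p.2 ∈ Rt then 0 else 1) ∧
    ((if (arenaStep δe δt Re Be p x).2 ∈ Bt then 0 else 1) ≤ if p.2 ∈ Bt then 0 else 1) :=
  ⟨ite_le_ite_of_imp (hRe p.1.1 x), ite_le_ite_of_imp (absorbing_hitStep_snd _ p.1 x),
    ite_le_ite_of_imp (hRt p.2 x), ite_le_ite_of_imp (hBt p.2 x)⟩

theorem arenaLevel_step_le :
    arenaLevel Re Rt Bt (arenaStep δe δt Re Be p x) ≤ arenaLevel Re Rt Bt p := by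
  have := arenaLevel_summands_le (Be := Be) hRe hRt hBt p x
  simp only [arenaLevel]
  omega

theorem mem_arenaGoal_iff_of_arenaLevel_eq
    (h : arenaLevel Re Rt Bt (arenaStep δe δt Re Be p x) = arenaLevel Re Rt Bt p) :
    arenaStep δe δt Re Be p x ∈ arenaGoal Re Rt Bt ↔ p ∈ arenaGoal Re Rt Bt := by
  obtain ⟨h₁, h₂, h₃, h₄⟩ := arenaLevel_summands_le (Be := Be) hRe hRt hBt p x
  simp only [arenaLevel] at h
  have e₁ : (arenaStep δe δt Re Be p x).1.1 ∈ Re ↔ p.1.1 ∈ Re := iff_of_ite_eq_ite (by omega)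
  have e₂ : (arenaStep δe δt Re Be p x).1.2 = true ↔ p.1.2 = true := iff_of_ite_eq_ite (by omega)
  have e₃ : (arenaStep δe δt Re Be p x).2 ∈ Rt ↔ p.2 ∈ Rt := iff_of_ite_eq_ite (by omega)
  have e₄ : (arenaStep δe δt Re Be p x).2 ∈ Bt ↔ p.2 ∈ Bt := iff_of_ite_eq_ite (by omega)
  simp only [arenaGoal, Set.mem_ofPred_eq, Bool.eq_false_iff, ne_eq, e₁, e₂, e₃, e₄]

end Level

theorem eventually_arenaGoal_of_enforcesUnder [Nonempty A] [Nonempty B] (hRt : Absorbing δt Rt)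
    {σ : List B → A}
    (hσ : EnforcesUnder σ (reachAvoid δt st₀ Rt Bt) (reachAvoid δe se₀ Re Be)) (τ : List A → B) :
    ∀ᶠ k in atTop, stateAfter (arenaStep δe δt Re Be) (arenaStart δe Re Be se₀ st₀) (play σ τ) k ∈
      arenaGoal Re Rt Bt := by
  simp only [stateAfter_arena_mem_arenaGoal]
  by_cases hW : ∀ k, stateAfter δe se₀ (play σ τ) k ∈ envWinning δe Re Be
  · by_cases hRe : play σ τ ∈ visits δe se₀ Re
    · have hEnv : play σ τ ∈ reachAvoid δe se₀ Re Be :=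
        ⟨hRe, fun ⟨k, hk⟩ => notMem_envWinning hk (hW k)⟩
      obtain ⟨ρ, hρ, hρπ⟩ := exists_envEnforces_play_eq hEnv hW
      obtain ⟨⟨k₀, hk₀⟩, hBt⟩ := hρπ ▸ hσ ρ hρ
      filter_upwards [eventually_ge_atTop k₀] with k hk _ _
      exact ⟨hRt.stateAfter_mem hk₀ hk, fun h => hBt ⟨k, h⟩⟩
    · exact Eventually.of_forall fun k h => absurd ⟨k, h⟩ hRe
  · push Not at hW
    obtain ⟨k₀, hk₀⟩ := hW
    filter_upwards [eventually_ge_atTop k₀] with k hk _ hW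
    exact absurd (hW k₀ hk) hk₀

theorem enforcesUnder_of_eventually_arenaGoal [Nonempty A] (hRe : Absorbing δe Re)
    (hBt : Absorbing δt Bt) {σ : List B → A}
    (hσ : ∀ τ, ∀ᶠ k in atTop, stateAfter (arenaStep δe δt Re Be) (arenaStart δe Re Be se₀ st₀)
      (play σ τ) k ∈ arenaGoal Re Rt Bt) :
    EnforcesUnder σ (reachAvoid δt st₀ Rt Bt) (reachAvoid δe se₀ Re Be) := by
  intro ρ hρ
  obtain ⟨⟨k₀, hk₀⟩, -⟩ := hρ σ
  have hgoal : ∀ᶠ k in atTop, stateAfter δt st₀ (play σ ρ) k ∈ Rt ∧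
      stateAfter δt st₀ (play σ ρ) k ∉ Bt := by
    filter_upwards [hσ ρ, eventually_ge_atTop k₀] with k hk hkk₀
    rw [stateAfter_arena_mem_arenaGoal] at hk
    exact hk (hRe.stateAfter_mem hk₀ hkk₀) fun n _ => stateAfter_mem_envWinning hRe hρ σ n
  refine ⟨hgoal.exists.imp fun k h => h.1, fun ⟨k, hk⟩ => ?_⟩
  obtain ⟨k', hk', hkk'⟩ := (hgoal.and (eventually_ge_atTop k)).exists
  exact hk'.2 (hBt.stateAfter_mem hk hkk')

theorem exists_finiteState_enforcesUnder_reachAvoid [Fintype Se] [Fintype St] [Finite A]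
    [Finite B] [Nonempty A] [Nonempty B] (hRe : Absorbing δe Re) (hRt : Absorbing δt Rt)
    (hBt : Absorbing δt Bt)
    (h : ∃ σ : List B → A, EnforcesUnder σ (reachAvoid δt st₀ Rt Bt) (reachAvoid δe se₀ Re Be)) :
    ∃ σ : List B → A, FiniteStateStrategy σ ∧
      EnforcesUnder σ (reachAvoid δt st₀ Rt Bt) (reachAvoid δe se₀ Re Be) := by
  obtain ⟨σ, hσ⟩ := h
  obtain ⟨m, hm⟩ := exists_positional_eventually_mem
    (arenaLevel_step_le hRe hRt hBt) (mem_arenaGoal_iff_of_arenaLevel_eq hRe hRt hBt)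
    (arenaStart δe Re Be se₀ st₀) ⟨σ, eventually_arenaGoal_of_enforcesUnder hRt hσ⟩
  exact ⟨_, finiteStateStrategy_positional _ _ m, enforcesUnder_of_eventually_arenaGoal hRe hBt hm⟩

end Arena

section DFA

variable {Q Q' : Type}

theorem reach_eq_visits (M : DFA (A × B) Q) :
    Reach {w | w ≠ [] ∧ w ∈ M.accepts} =
      visits (hitStep M.step M.accept) (M.start, false) {p | p.2 = true} := by
  ext π
  simp only [Reach, visits, Set.mem_ofPred_eq, stateAfter_hitStep_snd, Bool.false_eq_true,
    false_or, DFA.mem_accepts, ne_eq, ← List.length_eq_zero_iff, length_pre]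
  constructor
  · rintro ⟨k, hk, -, hacc⟩
    exact ⟨k, k - 1, by omega, by rwa [Nat.sub_add_cancel hk]⟩
  · rintro ⟨-, n, -, hacc⟩
    exact ⟨n + 1, by omega, by omega, hacc⟩

theorem safe_eq_compl_visits (M : DFA (A × B) Q) :
    Safe {w | w ≠ [] ∧ w ∈ M.accepts} =
      (visits (hitStep M.step M.acceptᶜ) (M.start, false) {p | p.2 = true})ᶜ := by
  ext π
  simp only [Safe, visits, Set.mem_compl_iff, Set.mem_ofPred_eq, stateAfter_hitStep_snd,
    Bool.false_eq_true, false_or, DFA.mem_accepts, ne_eq, ← List.length_eq_zero_iff, length_pre]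
  constructor
  · rintro h ⟨-, n, -, hacc⟩
    exact hacc (h (n + 1) (by omega)).2
  · intro h k hk
    refine ⟨by omega, by_contra fun hacc => h ⟨k, k - 1, by omega, ?_⟩⟩
    rwa [Nat.sub_add_cancel hk]

theorem reach_inter_safe_eq_reachAvoid (M : DFA (A × B) Q) (N : DFA (A × B) Q') :
    Reach {w | w ≠ [] ∧ w ∈ M.accepts} ∩ Safe {w | w ≠ [] ∧ w ∈ N.accepts} =
      reachAvoid (prodStep (hitStep M.step M.accept) (hitStep N.step N.acceptᶜ))
        ((M.start, false), (N.start, false)) {p | p.1.2 = true} {p | p.2.2 = true} := by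
  rw [reach_eq_visits, safe_eq_compl_visits]
  ext π
  simp [reachAvoid, visits, stateAfter_prodStep]

end DFA

end Synthesis

/-- Finite-state strategies suffice for synthesis under environment
specifications with reachability and safety properties: if `E₁, E₂, T₁, T₂`
are each recognized (as sets of nonempty finite words) by DFAs with finite
state types, and some agent strategy enforces `Reach T₁ ∩ Safe T₂` under
`Reach E₁ ∩ Safe E₂`, then some finite-state agent strategy does. -/
theorem finite_state_strategies_suffice {A B : Type}
    [Fintype A] [Fintype B] [Nonempty A] [Nonempty B]
    (E₁ E₂ T₁ T₂ : Set (List (A × B)))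
    (hE₁ : ∃ (Q : Type) (_ : Fintype Q) (M : DFA (A × B) Q),
      E₁ = {w | w ≠ [] ∧ w ∈ M.accepts})
    (hE₂ : ∃ (Q : Type) (_ : Fintype Q) (M : DFA (A × B) Q),
      E₂ = {w | w ≠ [] ∧ w ∈ M.accepts})
    (hT₁ : ∃ (Q : Type) (_ : Fintype Q) (M : DFA (A × B) Q),
      T₁ = {w | w ≠ [] ∧ w ∈ M.accepts})
    (hT₂ : ∃ (Q : Type) (_ : Fintype Q) (M : DFA (A × B) Q),
      T₂ = {w | w ≠ [] ∧ w ∈ M.accepts})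
    (h : ∃ σag : List B → A,
      EnforcesUnder σag (Reach T₁ ∩ Safe T₂) (Reach E₁ ∩ Safe E₂)) :
    ∃ σag : List B → A, FiniteStateStrategy σag ∧
      EnforcesUnder σag (Reach T₁ ∩ Safe T₂) (Reach E₁ ∩ Safe E₂) := by
  obtain ⟨Q₁, _, M₁, rfl⟩ := hE₁
  obtain ⟨Q₂, _, M₂, rfl⟩ := hE₂
  obtain ⟨Q₃, _, M₃, rfl⟩ := hT₁
  obtain ⟨Q₄, _, M₄, rfl⟩ := hT₂
  simp only [Synthesis.reach_inter_safe_eq_reachAvoid] at h ⊢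
  exact Synthesis.exists_finiteState_enforcesUnder_reachAvoid
    (Synthesis.absorbing_hitStep_snd _).prodStep_fst
    (Synthesis.absorbing_hitStep_snd _).prodStep_fst
    (Synthesis.absorbing_hitStep_snd _).prodStep_snd h
end
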